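/- Let f0, f1 be holomorphic without common zeros on a domain, a^j = (a^j_0 : a^j_1) ∈ P^1(C) distinct unit-norm points, F_j := a^j_0 f_1 − a^j_1 f_0, and suppose every zero of F_j has order at least m_j ≥ 2 for each j. If z0 is a zero of F_i for some i, then the quantity ν_{W(f0,f1)}(z0) − Σ_{j=1}^q (1 − 1/m_j)·ν_{F_j}(z0) equals ν_{F_i}(z0)/m_i − 1, and in particular is ≥ 0. -/

import Mathlib

/-!
Since `W(f₀, a₀ f₁ - a₁ f₀) = a₀ W(f₀, f₁)`, the order of `W(f₀, f₁)` at `z₀` is that of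
`f₀ F_i' - F_i f₀'`. As `f₀(z₀) ≠ 0` and `F_i` vanishes to order `ν ≥ m_i` there, the first term
has order exactly `ν - 1` and the second order at least `ν`, so `ν_W(z₀) = ν - 1`. No other `F_j`
vanishes at `z₀`, so only the `i`-th term of the sum survives.
-/

open Finset Filter Topology

variable {𝕜 : Type*} [NontriviallyNormedField 𝕜] {f g : 𝕜 → 𝕜} {z₀ : 𝕜}

noncomputable def wronskian (f g : 𝕜 → 𝕜) : 𝕜 → 𝕜 := fun z => f z * deriv g z - g z * deriv f z

theorem wronskian_mul_sub_mul_apply {z : 𝕜} (hf : DifferentiableAt 𝕜 f z)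
    (hg : DifferentiableAt 𝕜 g z) (c d : 𝕜) :
    wronskian f (fun w => c * g w - d * f w) z = c * wronskian f g z := by
  simp only [wronskian]
  rw [deriv_fun_sub (hg.const_mul c) (hf.const_mul d), deriv_const_mul _ hg,
    deriv_const_mul _ hf]
  ring

theorem apply_eq_zero_of_analyticOrderAt_eq_add_one {n : ℕ}
    (hgn : analyticOrderAt g z₀ = n + 1) : g z₀ = 0 :=
  (analyticOrderAt_ne_zero.mp (by simp [hgn])).2

theorem analyticOrderAt_deriv_of_eq_add_one [CompleteSpace 𝕜] [CharZero 𝕜] {n : ℕ}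
    (hg : AnalyticAt 𝕜 g z₀) (hgn : analyticOrderAt g z₀ = n + 1) :
    analyticOrderAt (deriv g) z₀ = n := by
  have := hg.analyticOrderAt_deriv_add_one
  simp only [apply_eq_zero_of_analyticOrderAt_eq_add_one hgn, sub_zero, hgn] at this
  exact ENat.add_left_injective_of_ne_top ENat.one_ne_top this

theorem analyticOrderAt_wronskian_of_ne_zero [CompleteSpace 𝕜] [CharZero 𝕜] {n : ℕ}
    (hf : AnalyticAt 𝕜 f z₀) (hfz : f z₀ ≠ 0) (hg : AnalyticAt 𝕜 g z₀)
    (hgn : analyticOrderAt g z₀ = n + 1) :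
    analyticOrderAt (wronskian f g) z₀ = n := by
  have hf0 : analyticOrderAt f z₀ = 0 := hf.analyticOrderAt_eq_zero.mpr hfz
  have hlead : analyticOrderAt (f * deriv g) z₀ = n := by
    rw [analyticOrderAt_mul hf hg.deriv, hf0, analyticOrderAt_deriv_of_eq_add_one hg hgn,
      zero_add]
  have htail : (n : ℕ∞) < analyticOrderAt (-(g * deriv f)) z₀ := by
    rw [analyticOrderAt_neg, analyticOrderAt_mul hg hf.deriv, hgn]
    exact (ENat.lt_add_one_iff (ENat.natCast_ne_top n)).mpr le_rfl |>.trans_le le_self_add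
  have hW : wronskian f g = f * deriv g + -(g * deriv f) := by
    rw [← sub_eq_add_neg]; rfl
  rw [hW, ← hlead]
  rw [← hlead] at htail
  exact analyticOrderAt_add_eq_left_of_lt htail

theorem analyticOrderAt_wronskian_of_mul_sub_mul [CompleteSpace 𝕜] [CharZero 𝕜] {n : ℕ}
    {f₀ f₁ : 𝕜 → 𝕜} (hf₀ : AnalyticAt 𝕜 f₀ z₀) (hf₁ : AnalyticAt 𝕜 f₁ z₀)
    (hf₀z : f₀ z₀ ≠ 0) {c d : 𝕜}
    (hF : analyticOrderAt (fun z => c * f₁ z - d * f₀ z) z₀ = n + 1) :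
    analyticOrderAt (wronskian f₀ f₁) z₀ = n := by
  have hc : c ≠ 0 := by
    rintro rfl
    have hFz := apply_eq_zero_of_analyticOrderAt_eq_add_one hF
    have hd : d = 0 := by simpa [hf₀z] using hFz
    simp [hd, analyticOrderAt_eq_top.mpr] at hF
    norm_cast at hF
  have hFa : AnalyticAt 𝕜 (fun z => c * f₁ z - d * f₀ z) z₀ := by fun_prop
  have hcW : (fun _ => c) * wronskian f₀ f₁ =ᶠ[𝓝 z₀]
      wronskian f₀ (fun z => c * f₁ z - d * f₀ z) := by
    filter_upwards [hf₀.eventually_analyticAt, hf₁.eventually_analyticAt] with z h₀ h₁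
    exact (wronskian_mul_sub_mul_apply h₀.differentiableAt h₁.differentiableAt c d).symm
  have hWa : AnalyticAt 𝕜 (wronskian f₀ f₁) z₀ := (hf₀.mul hf₁.deriv).sub (hf₁.mul hf₀.deriv)
  have hc0 : analyticOrderAt (fun _ : 𝕜 => c) z₀ = 0 :=
    analyticAt_const.analyticOrderAt_eq_zero.mpr hc
  rw [← zero_add (analyticOrderAt _ z₀), ← hc0,
    ← analyticOrderAt_mul analyticAt_const hWa, analyticOrderAt_congr hcW]
  exact analyticOrderAt_wronskian_of_ne_zero hf₀ hf₀z hFa hF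

theorem mul_sub_mul_ne_zero_of_mul_ne_mul {R : Type*} [CommRing R] [IsDomain R]
    {a₁ a₂ b₁ b₂ x y : R} (hy : y ≠ 0)
    (hab : a₁ * b₂ ≠ b₁ * a₂) (ha : a₁ * x - a₂ * y = 0) : b₁ * x - b₂ * y ≠ 0 := by
  intro hb
  exact hab (mul_right_cancel₀ hy (by linear_combination b₁ * ha - a₁ * hb))

theorem wronskian_order_defect_general (Ω : Set ℂ) (f₀ f₁ : ℂ → ℂ)
    (hf₀ : AnalyticOnNhd ℂ f₀ Ω) (hf₁ : AnalyticOnNhd ℂ f₁ Ω)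
    (q : ℕ) (a : Fin q → ℂ × ℂ)
    (hdist : ∀ i j, i ≠ j → (a i).1 * (a j).2 ≠ (a j).1 * (a i).2)
    (F : Fin q → ℂ → ℂ) (hFdef : ∀ j z, F j z = (a j).1 * f₁ z - (a j).2 * f₀ z)
    (W : ℂ → ℂ) (hWdef : ∀ z, W z = f₀ z * deriv f₁ z - f₁ z * deriv f₀ z)
    (m : Fin q → ℝ) (hm : ∀ j, 2 ≤ m j)
    (hram : ∀ j, ∀ z, ∀ hz : z ∈ Ω, F j z = 0 →
      ∀ k : ℕ, analyticOrderAt (F j) z = (k : ℕ∞) → m j ≤ (k : ℝ))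
    (z₀ : ℂ) (hz₀ : z₀ ∈ Ω) (i : Fin q) (hFi : F i z₀ = 0) (hf₀z₀ : f₀ z₀ ≠ 0)
    (νW : ℕ) (hνW : analyticOrderAt W z₀ = (νW : ℕ∞))
    (νF : Fin q → ℕ) (hνF : ∀ j, analyticOrderAt (F j) z₀ = ((νF j : ℕ∞))) :
    (νW : ℝ) - ∑ j, (1 - 1 / m j) * (νF j : ℝ) = (νF i : ℝ) / m i - 1 ∧
      0 ≤ (νW : ℝ) - ∑ j, (1 - 1 / m j) * (νF j : ℝ) := by
  have hF : ∀ j, F j = fun z => (a j).1 * f₁ z - (a j).2 * f₀ z := fun j => funext (hFdef j)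
  have hmi : m i ≤ νF i := hram i z₀ hz₀ hFi (νF i) (hνF i)
  obtain ⟨n, hn⟩ : ∃ n, νF i = n + 1 := Nat.exists_eq_add_one.mpr (by exact_mod_cast
    (by linarith [hm i] : (0 : ℝ) < νF i))
  have hνWn : νW = n := by
    have hWn := analyticOrderAt_wronskian_of_mul_sub_mul (hf₀ z₀ hz₀) (hf₁ z₀ hz₀) hf₀z₀
      (by rw [← hF, hνF, hn]; push_cast; rfl)
    have hW : W = wronskian f₀ f₁ := funext hWdef
    rwa [← hW, hνW, Nat.cast_inj] at hWn
  have hνFj : ∀ j ≠ i, νF j = 0 := by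
    intro j hj
    have hFj : F j z₀ ≠ 0 := by
      rw [hFdef] at hFi ⊢
      exact mul_sub_mul_ne_zero_of_mul_ne_mul hf₀z₀ (hdist i j hj.symm) hFi
    exact_mod_cast (hνF j).symm.trans (analyticOrderAt_eq_zero.mpr (.inr hFj))
  have hsum : ∑ j, (1 - 1 / m j) * (νF j : ℝ) = (1 - 1 / m i) * νF i :=
    sum_eq_single_of_mem i (mem_univ i) fun j _ hj => by simp [hνFj j hj]
  have hdefect : (νW : ℝ) - ∑ j, (1 - 1 / m j) * (νF j : ℝ) = (νF i : ℝ) / m i - 1 := by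
    rw [hsum, hνWn, hn]; push_cast; ring
  refine ⟨hdefect, ?_⟩
  rw [hdefect, sub_nonneg, one_le_div₀ (by linarith [hm i])]
  exact hmi

/-- If `f0, f1` are holomorphic without common zeros, `a^j` are distinct unit-norm
points of `ℙ¹(ℂ)`, `F_j := a^j_0·f1 - a^j_1·f0` and every zero of `F_j` has order at
least `m_j ≥ 2`, then at a zero `z0` of `F_i` (with `f0(z0) ≠ 0`),
`ν_W(z0) - Σ_j (1 - 1/m_j)·ν_{F_j}(z0) = ν_{F_i}(z0)/m_i - 1 ≥ 0`. -/
theorem wronskian_order_defect (Ω : Set ℂ) (hΩ : IsOpen Ω) (f₀ f₁ : ℂ → ℂ)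
    (hf₀ : AnalyticOnNhd ℂ f₀ Ω) (hf₁ : AnalyticOnNhd ℂ f₁ Ω)
    (hred : ∀ z ∈ Ω, f₀ z ≠ 0 ∨ f₁ z ≠ 0)
    (q : ℕ) (a : Fin q → ℂ × ℂ)
    (hunit : ∀ j, ‖(a j).1‖ ^ 2 + ‖(a j).2‖ ^ 2 = 1)
    (hdist : ∀ i j, i ≠ j → (a i).1 * (a j).2 ≠ (a j).1 * (a i).2)
    (F : Fin q → ℂ → ℂ) (hFdef : ∀ j z, F j z = (a j).1 * f₁ z - (a j).2 * f₀ z)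
    (W : ℂ → ℂ) (hWdef : ∀ z, W z = f₀ z * deriv f₁ z - f₁ z * deriv f₀ z)
    (hFa : ∀ j, ∀ z ∈ Ω, AnalyticAt ℂ (F j) z)
    (hWa : ∀ z ∈ Ω, AnalyticAt ℂ W z)
    (m : Fin q → ℝ) (hm : ∀ j, 2 ≤ m j)
    (hram : ∀ j, ∀ z, ∀ hz : z ∈ Ω, F j z = 0 →
      ∀ k : ℕ, analyticOrderAt (F j) z = (k : ℕ∞) → m j ≤ (k : ℝ))
    (z₀ : ℂ) (hz₀ : z₀ ∈ Ω) (i : Fin q) (hFi : F i z₀ = 0) (hf₀z₀ : f₀ z₀ ≠ 0)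
    (νW : ℕ) (hνW : analyticOrderAt W z₀ = (νW : ℕ∞))
    (νF : Fin q → ℕ) (hνF : ∀ j, analyticOrderAt (F j) z₀ = ((νF j : ℕ∞))) :
    (νW : ℝ) - ∑ j, (1 - 1 / m j) * (νF j : ℝ) = (νF i : ℝ) / m i - 1 ∧
      0 ≤ (νW : ℝ) - ∑ j, (1 - 1 / m j) * (νF j : ℝ) :=
  wronskian_order_defect_general Ω f₀ f₁ hf₀ hf₁ q a hdist F hFdef W hWdef m hm hram z₀ hz₀ i hFi
    hf₀z₀ νW hνW νF hνF
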